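/- arXiv:2505.02970 — 5 statements merged into one kernel-verified Lean document; each statement's English description precedes it below -/
import Mathlib

section
/- Let P be a symmetric positive semidefinite n×n real matrix, R a symmetric positive definite m×m real matrix, and B an n×m real matrix. Then P ⪰ P - P B (R + Bᵀ P B)^{-1} Bᵀ P ⪰ 0, where ⪰ denotes the Loewner order (X ⪰ Y means X - Y is positive semidefinite). In particular R + Bᵀ P B is positive definite and hence invertible. -/
/-!
Write `S = R + Bᴴ P B`. The block matrix `[[P, P B], [Bᴴ P, S]]` is the sum of the Gram-type
matrix `[1 B]ᴴ P [1 B]` and `diag(0, R)`, hence positive semidefinite; its Schur complement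
with respect to the positive definite block `S` is `P - P B S⁻¹ Bᴴ P`. The other inequality
says that `P B S⁻¹ Bᴴ P = (P B) S⁻¹ (P B)ᴴ` is positive semidefinite, which holds because
`S⁻¹` is.
-/

open Matrix

namespace Matrix

variable {m n α : Type*} [Fintype m] [Fintype n]

section Ring

variable [Ring α] [PartialOrder α] [StarRing α]

theorem PosSemidef.fromBlocks_mul_conjTranspose_mul_mul [DecidableEq n] {P : Matrix n n α}
    (hP : P.PosSemidef) (B : Matrix n m α) :
    (fromBlocks P (P * B) (P * B)ᴴ (Bᴴ * P * B)).PosSemidef := by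
  have h := hP.conjTranspose_mul_mul_same (fromCols (1 : Matrix n n α) B)
  rw [conjTranspose_fromCols_eq_fromRows_conjTranspose, fromRows_mul, fromRows_mul_fromCols] at h
  simpa [hP.isHermitian.eq, Matrix.mul_assoc] using h

theorem PosSemidef.fromBlocks_zero_zero_zero [DecidableEq m] {R : Matrix m m α}
    (hR : R.PosSemidef) : (fromBlocks (0 : Matrix n n α) 0 0 R).PosSemidef := by
  have h := hR.conjTranspose_mul_mul_same (fromCols (0 : Matrix m n α) (1 : Matrix m m α))
  rw [conjTranspose_fromCols_eq_fromRows_conjTranspose, fromRows_mul, fromRows_mul_fromCols] at h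
  simpa using h

theorem PosDef.add_conjTranspose_mul_mul_same [AddLeftMono α] {R : Matrix m m α}
    {P : Matrix n n α} (hR : R.PosDef) (hP : P.PosSemidef) (B : Matrix n m α) :
    (R + Bᴴ * P * B).PosDef :=
  hR.add_posSemidef (hP.conjTranspose_mul_mul_same B)

theorem PosSemidef.fromBlocks_mul_add_conjTranspose_mul_mul [AddLeftMono α] [DecidableEq n]
    [DecidableEq m] {P : Matrix n n α} {R : Matrix m m α} (hP : P.PosSemidef)
    (hR : R.PosSemidef) (B : Matrix n m α) :
    (fromBlocks P (P * B) (P * B)ᴴ (R + Bᴴ * P * B)).PosSemidef := by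
  have h := (hP.fromBlocks_mul_conjTranspose_mul_mul B).add (hR.fromBlocks_zero_zero_zero (n := n))
  rwa [fromBlocks_add, add_zero, add_zero, add_zero, add_comm (Bᴴ * P * B)] at h

end Ring

section Field

variable [Field α] [PartialOrder α] [StarRing α] [StarOrderedRing α] [DecidableEq m]
  [DecidableEq n]

theorem PosSemidef.sub_mul_mul_inv_mul_mul {P : Matrix n n α} {R : Matrix m m α}
    (hP : P.PosSemidef) (hR : R.PosDef) (B : Matrix n m α) :
    (P - P * B * (R + Bᴴ * P * B)⁻¹ * Bᴴ * P).PosSemidef := by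
  have hS := hR.add_conjTranspose_mul_mul_same hP B
  have := hS.isUnit.invertible
  have h := (PosDef.fromBlocks₂₂ P (P * B) hS).mp
    (hP.fromBlocks_mul_add_conjTranspose_mul_mul hR.posSemidef B)
  rwa [conjTranspose_mul, hP.isHermitian.eq, ← Matrix.mul_assoc] at h

end Field

end Matrix

/-- Let `P` be symmetric positive semidefinite, `R` symmetric positive definite, `B` a real
matrix. Then `R + Bᵀ P B` is positive definite (hence invertible), and
`P ⪰ P - P B (R + Bᵀ P B)⁻¹ Bᵀ P ⪰ 0` in the Loewner order. -/
theorem stmt3 {n m : ℕ} {P : Matrix (Fin n) (Fin n) ℝ} {R : Matrix (Fin m) (Fin m) ℝ}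
    (B : Matrix (Fin n) (Fin m) ℝ) (hP : P.PosSemidef) (hR : R.PosDef) :
    (R + Bᵀ * P * B).PosDef ∧
    (P - (P - P * B * (R + Bᵀ * P * B)⁻¹ * Bᵀ * P)).PosSemidef ∧
    (P - P * B * (R + Bᵀ * P * B)⁻¹ * Bᵀ * P).PosSemidef := by
  rw [← conjTranspose_eq_transpose_of_trivial B]
  have hS := hR.add_conjTranspose_mul_mul_same hP B
  refine ⟨hS, ?_, hP.sub_mul_mul_inv_mul_mul hR B⟩
  have h := hS.inv.posSemidef.mul_mul_conjTranspose_same (P * B)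
  rw [sub_sub_cancel]
  rwa [conjTranspose_mul, hP.isHermitian.eq, ← Matrix.mul_assoc] at h
end

section
/- Let P^i, P^j be symmetric positive semidefinite n×n matrices, R symmetric positive definite m×m, A ∈ ℝ^{n×n}, B ∈ ℝ^{n×m}. Define K^s = (R + Bᵀ P^s B)^{-1} Bᵀ P^s A for s ∈ {i,j}, A^j = A - B K^j, and Λ_i = I_n + B R^{-1} Bᵀ P^i. Then K^i - K^j = R^{-1} Bᵀ Λ_i^{-ᵀ} (P^i - P^j) A^j. -/
/-!
Two identities hold for any invertible `R` and `S = R + C P B` over a commutative ring.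
The push-through identity `S (R⁻¹ C) = C (1 + P B R⁻¹ C)` gives `S⁻¹ C = R⁻¹ C M⁻¹` with
`M = 1 + P B R⁻¹ C`, and the gain `K = S⁻¹ C P A` solves `K = R⁻¹ C P (A - B K)`.
Hence `Kᵢ = R⁻¹ C Mᵢ⁻¹ Pᵢ A` and `Kⱼ = R⁻¹ C Mᵢ⁻¹ Mᵢ Pⱼ Aⱼ`, and the brackets differ by
`Pᵢ A - Pⱼ Aⱼ - Pᵢ B Kⱼ = (Pᵢ - Pⱼ) Aⱼ`. For `C = Bᵀ` and symmetric `R`, `Pᵢ`, `Mᵢ = Λᵢᵀ`.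
-/

open Matrix

variable {m n : Type*} [Fintype m] [Fintype n] [DecidableEq m]
  {α : Type*} [CommRing α] {R : Matrix m m α} {B : Matrix n m α} {C : Matrix m n α}

noncomputable def lqrGain (R : Matrix m m α) (B : Matrix n m α) (C : Matrix m n α) (P A : Matrix n n α) :
    Matrix m n α :=
  (R + C * P * B)⁻¹ * C * P * A

theorem lqrGain_eq {P : Matrix n n α} (A : Matrix n n α) (hR : IsUnit R.det)
    (hS : IsUnit (R + C * P * B).det) :
    lqrGain R B C P A = R⁻¹ * C * P * (A - B * lqrGain R B C P A) := by
  set K := lqrGain R B C P A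
  have hSK : (R + C * P * B) * K = C * P * A := by
    simp only [K, lqrGain, Matrix.mul_assoc _ C, Matrix.mul_assoc _ (C * P)]
    exact mul_nonsing_inv_cancel_left _ _ hS
  have hRK : R * K = C * P * (A - B * K) := by
    rw [Matrix.mul_sub, ← hSK, Matrix.add_mul]
    simp only [Matrix.mul_assoc, add_sub_cancel_right]
  rw [Matrix.mul_assoc R⁻¹ C P, Matrix.mul_assoc R⁻¹, ← hRK, nonsing_inv_mul_cancel_left _ _ hR]

variable [DecidableEq n]

namespace Matrix

variable {P : Matrix n n α}

theorem add_mul_mul_mul_inv_mul (hR : IsUnit R.det) :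
    (R + C * P * B) * (R⁻¹ * C) = C * (1 + P * B * R⁻¹ * C) := by
  simp only [Matrix.add_mul, Matrix.mul_add, Matrix.mul_one, Matrix.mul_assoc,
    mul_nonsing_inv_cancel_left _ _ hR]

theorem isUnit_det_one_add_mul_mul_inv_mul (hR : IsUnit R.det)
    (hS : IsUnit (R + C * P * B).det) : IsUnit (1 + P * B * R⁻¹ * C).det := by
  have hcomm : (1 + P * B * (R⁻¹ * C)).det = (1 + R⁻¹ * C * (P * B)).det :=
    det_one_add_mul_comm _ _
  have hfactor : 1 + R⁻¹ * C * (P * B) = R⁻¹ * (R + C * P * B) := by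
    rw [Matrix.mul_add, nonsing_inv_mul _ hR]
    simp only [Matrix.mul_assoc]
  rw [Matrix.mul_assoc _ R⁻¹, hcomm, hfactor, det_mul]
  exact (isUnit_nonsing_inv_det R hR).mul hS

theorem add_mul_mul_inv_mul (hR : IsUnit R.det) (hS : IsUnit (R + C * P * B).det) :
    (R + C * P * B)⁻¹ * C = R⁻¹ * C * (1 + P * B * R⁻¹ * C)⁻¹ := by
  have hM := isUnit_det_one_add_mul_mul_inv_mul hR hS
  calc (R + C * P * B)⁻¹ * C
      = (R + C * P * B)⁻¹ * (C * (1 + P * B * R⁻¹ * C)) * (1 + P * B * R⁻¹ * C)⁻¹ := by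
        rw [← Matrix.mul_assoc, mul_nonsing_inv_cancel_right _ _ hM]
    _ = R⁻¹ * C * (1 + P * B * R⁻¹ * C)⁻¹ := by
        rw [← add_mul_mul_mul_inv_mul hR, nonsing_inv_mul_cancel_left _ _ hS]

end Matrix

theorem lqrGain_sub_lqrGain (A : Matrix n n α) {Pi Pj : Matrix n n α} (hR : IsUnit R.det)
    (hSi : IsUnit (R + C * Pi * B).det) (hSj : IsUnit (R + C * Pj * B).det) :
    lqrGain R B C Pi A - lqrGain R B C Pj A =
      R⁻¹ * C * (1 + Pi * B * R⁻¹ * C)⁻¹ * (Pi - Pj) * (A - B * lqrGain R B C Pj A) := by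
  set M := 1 + Pi * B * R⁻¹ * C
  set Kj := lqrGain R B C Pj A
  set Aj := A - B * Kj
  have hKj : Kj = R⁻¹ * C * Pj * Aj := lqrGain_eq A hR hSj
  have hMPj : M * (Pj * Aj) = Pj * Aj + Pi * B * Kj := by
    rw [hKj]
    simp only [M, Matrix.add_mul, Matrix.one_mul, Matrix.mul_assoc]
  have hKj' : Kj = R⁻¹ * C * M⁻¹ * (M * (Pj * Aj)) := by
    rw [Matrix.mul_assoc _ M⁻¹, nonsing_inv_mul_cancel_left _ _
      (isUnit_det_one_add_mul_mul_inv_mul hR hSi), hKj]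
    simp only [Matrix.mul_assoc]
  have hKi : lqrGain R B C Pi A = R⁻¹ * C * M⁻¹ * (Pi * A) := by
    rw [lqrGain, add_mul_mul_inv_mul hR hSi]
    simp only [M, Matrix.mul_assoc]
  have hbracket : Pi * A - M * (Pj * Aj) = (Pi - Pj) * Aj := by
    rw [hMPj]
    simp only [Aj, Matrix.mul_sub, Matrix.sub_mul, Matrix.mul_assoc]
    abel
  rw [hKi, hKj', ← Matrix.mul_sub, hbracket, Matrix.mul_assoc _ (Pi - Pj)]

/-- With `K^s = (R + Bᵀ P^s B)⁻¹ Bᵀ P^s A`, `A^j = A - B K^j`, and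
`Λ_i = I_n + B R⁻¹ Bᵀ P^i`, one has `K^i - K^j = R⁻¹ Bᵀ Λ_i⁻ᵀ (P^i - P^j) A^j`. -/
theorem stmt8 {n m : ℕ} (A : Matrix (Fin n) (Fin n) ℝ) (B : Matrix (Fin n) (Fin m) ℝ)
    {R : Matrix (Fin m) (Fin m) ℝ} {Pi Pj : Matrix (Fin n) (Fin n) ℝ}
    (hR : R.PosDef) (hPi : Pi.PosSemidef) (hPj : Pj.PosSemidef) :
    (R + Bᵀ * Pi * B)⁻¹ * Bᵀ * Pi * A - (R + Bᵀ * Pj * B)⁻¹ * Bᵀ * Pj * A =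
      R⁻¹ * Bᵀ * ((1 + B * R⁻¹ * Bᵀ * Pi)⁻¹)ᵀ * (Pi - Pj) *
        (A - B * ((R + Bᵀ * Pj * B)⁻¹ * Bᵀ * Pj * A)) := by
  have isUnit_det_add {P : Matrix (Fin n) (Fin n) ℝ} (hP : P.PosSemidef) :
      IsUnit (R + Bᵀ * P * B).det :=
    (hR.add_posSemidef (by simpa using hP.conjTranspose_mul_mul_same B)).isUnit.map detMonoidHom
  have hRT : Rᵀ = R := hR.isHermitian
  have hPiT : Piᵀ = Pi := hPi.isHermitian
  have hΛT : (1 + B * R⁻¹ * Bᵀ * Pi)ᵀ = 1 + Pi * B * R⁻¹ * Bᵀ := by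
    simp only [transpose_add, transpose_one, transpose_mul, transpose_transpose,
      transpose_nonsing_inv, hRT, hPiT, Matrix.mul_assoc]
  rw [transpose_nonsing_inv, hΛT]
  exact lqrGain_sub_lqrGain A (hR.isUnit.map detMonoidHom) (isUnit_det_add hPi)
    (isUnit_det_add hPj)
end

section
/- Comparison principle for Riccati difference equations: let {P_i^1} and {P_i^2} be sequences of symmetric positive semidefinite n×n matrices defined by P_{i+1}^j = Aᵀ P_i^j A - Aᵀ P_i^j B (R + Bᵀ P_i^j B)^{-1} Bᵀ P_i^j A + S_i^j, with initial conditions P_0^1 ⪰ P_0^2 ⪰ 0 and cost matrices satisfying S_i^1 ⪰ S_i^2 for all i ∈ ℕ (and S_i^j such that all iterates are positive semidefinite, e.g. S_i^j ⪰ 0). Then P_i^1 ⪰ P_i^2 for all i ∈ ℕ. -/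
/-!
Write `M_P = R + Bᵀ P B` and `K_P = M_P⁻¹ Bᵀ P A` for the optimal gain. Completing the square,
`Aᵀ P A - Aᵀ P B K_P = (A - B K_P)ᵀ P (A - B K_P) + K_Pᵀ R K_P`, and for any gain `K`
the closed-loop cost `(A - B K)ᵀ Q (A - B K) + Kᵀ R K` exceeds its value at `K_Q` by
`(K - K_Q)ᵀ M_Q (K - K_Q)`. Evaluating both at `K = K_P` gives
`Ric(P) - Ric(Q) = (A - B K_P)ᵀ (P - Q) (A - B K_P) + (K_P - K_Q)ᵀ M_Q (K_P - K_Q)`,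
so the Riccati map is monotone on positive semidefinite matrices, and the comparison follows
by induction.
-/

open Matrix

namespace Riccati

variable {ι κ α : Type*} [Fintype ι] [Fintype κ]

section CommRing

variable [CommRing α] (A : Matrix ι ι α) (B : Matrix ι κ α) (R : Matrix κ κ α)

theorem sub_mul_gain_eq_closedLoop {P : Matrix ι ι α} {K : Matrix κ ι α}
    (hK : (R + Bᵀ * P * B) * K = Bᵀ * P * A) :
    Aᵀ * P * A - Aᵀ * P * B * K = (A - B * K)ᵀ * P * (A - B * K) + Kᵀ * R * K := by
  calc Aᵀ * P * A - Aᵀ * P * B * K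
      = Aᵀ * P * A - Aᵀ * P * B * K - Kᵀ * (Bᵀ * P * A) + Kᵀ * ((R + Bᵀ * P * B) * K) := by
        rw [hK]; abel
    _ = (A - B * K)ᵀ * P * (A - B * K) + Kᵀ * R * K := by
        simp only [transpose_sub, transpose_mul, Matrix.sub_mul, Matrix.mul_sub, Matrix.add_mul,
          Matrix.mul_add, Matrix.mul_assoc]
        abel

theorem closedLoop_eq_sub_mul_gain_add {Q : Matrix ι ι α} {L : Matrix κ ι α}
    (hR : Rᵀ = R) (hQ : Qᵀ = Q) (hL : (R + Bᵀ * Q * B) * L = Bᵀ * Q * A) (K : Matrix κ ι α) :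
    (A - B * K)ᵀ * Q * (A - B * K) + Kᵀ * R * K =
      Aᵀ * Q * A - Aᵀ * Q * B * L + (K - L)ᵀ * (R + Bᵀ * Q * B) * (K - L) := by
  have hLt : Lᵀ * (R + Bᵀ * Q * B) = Aᵀ * Q * B := by
    simpa only [transpose_mul, transpose_add, transpose_transpose, hR, hQ, Matrix.mul_assoc]
      using congrArg transpose hL
  calc (A - B * K)ᵀ * Q * (A - B * K) + Kᵀ * R * K
      = Aᵀ * Q * A - Aᵀ * Q * B * L + (Kᵀ * ((R + Bᵀ * Q * B) * K) - Kᵀ * ((R + Bᵀ * Q * B) * L)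
          - Lᵀ * (R + Bᵀ * Q * B) * K + Lᵀ * (R + Bᵀ * Q * B) * L) := by
        rw [hL, hLt]
        simp only [transpose_sub, transpose_mul, Matrix.sub_mul, Matrix.mul_sub, Matrix.add_mul,
          Matrix.mul_add, Matrix.mul_assoc]
        abel
    _ = Aᵀ * Q * A - Aᵀ * Q * B * L + (K - L)ᵀ * (R + Bᵀ * Q * B) * (K - L) := by
        simp only [transpose_sub, Matrix.sub_mul, Matrix.mul_sub, Matrix.mul_assoc]
        abel

end CommRing

theorem _root_.Matrix.PosSemidef.transpose_mul_mul_same {m : Type*} [Fintype m]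
    {P : Matrix ι ι ℝ} (hP : P.PosSemidef) (C : Matrix ι m ℝ) : (Cᵀ * P * C).PosSemidef := by
  simpa only [conjTranspose_eq_transpose_of_trivial] using hP.conjTranspose_mul_mul_same C

theorem posDef_add_transpose_mul_mul {R : Matrix κ κ ℝ} (B : Matrix ι κ ℝ) (hR : R.PosDef)
    {P : Matrix ι ι ℝ} (hP : P.PosSemidef) :
    (R + Bᵀ * P * B).PosDef :=
  hR.add_posSemidef (hP.transpose_mul_mul_same B)

variable [DecidableEq κ]

noncomputable def riccati (A : Matrix ι ι ℝ) (B : Matrix ι κ ℝ) (R : Matrix κ κ ℝ)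
    (P : Matrix ι ι ℝ) : Matrix ι ι ℝ :=
  Aᵀ * P * A - Aᵀ * P * B * (R + Bᵀ * P * B)⁻¹ * Bᵀ * P * A

noncomputable def gain (A : Matrix ι ι ℝ) (B : Matrix ι κ ℝ) (R : Matrix κ κ ℝ)
    (P : Matrix ι ι ℝ) : Matrix κ ι ℝ :=
  (R + Bᵀ * P * B)⁻¹ * (Bᵀ * P * A)

variable (A : Matrix ι ι ℝ) (B : Matrix ι κ ℝ) {R : Matrix κ κ ℝ}

theorem mul_gain {P : Matrix ι ι ℝ} (hR : R.PosDef) (hP : P.PosSemidef) :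
    (R + Bᵀ * P * B) * gain A B R P = Bᵀ * P * A :=
  mul_nonsing_inv_cancel_left _ _ (posDef_add_transpose_mul_mul B hR hP).det_pos.ne'.isUnit

theorem riccati_eq_sub_mul_gain (P : Matrix ι ι ℝ) :
    riccati A B R P = Aᵀ * P * A - Aᵀ * P * B * gain A B R P := by
  simp only [riccati, gain, Matrix.mul_assoc]

theorem riccati_posSemidef (hR : R.PosDef) {P : Matrix ι ι ℝ} (hP : P.PosSemidef) :
    (riccati A B R P).PosSemidef := by
  rw [riccati_eq_sub_mul_gain, sub_mul_gain_eq_closedLoop A B R (mul_gain A B hR hP)]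
  exact (hP.transpose_mul_mul_same _).add (hR.posSemidef.transpose_mul_mul_same _)

theorem riccati_sub_riccati_eq (hR : R.PosDef) {P Q : Matrix ι ι ℝ} (hP : P.PosSemidef)
    (hQ : Q.PosSemidef) :
    riccati A B R P - riccati A B R Q =
      (A - B * gain A B R P)ᵀ * (P - Q) * (A - B * gain A B R P) +
        (gain A B R P - gain A B R Q)ᵀ * (R + Bᵀ * Q * B) * (gain A B R P - gain A B R Q) := by
  have hQ_closedLoop := closedLoop_eq_sub_mul_gain_add A B R
    (isHermitian_iff_isSymm.mp hR.isHermitian).eq (isHermitian_iff_isSymm.mp hQ.isHermitian).eq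
    (mul_gain A B hR hQ) (gain A B R P)
  rw [riccati_eq_sub_mul_gain, riccati_eq_sub_mul_gain,
    sub_mul_gain_eq_closedLoop A B R (mul_gain A B hR hP), eq_sub_of_add_eq hQ_closedLoop.symm]
  simp only [Matrix.mul_sub, Matrix.sub_mul]
  abel

theorem riccati_sub_riccati_posSemidef (hR : R.PosDef) {P Q : Matrix ι ι ℝ}
    (hQ : Q.PosSemidef) (hPQ : (P - Q).PosSemidef) :
    (riccati A B R P - riccati A B R Q).PosSemidef := by
  have hP : P.PosSemidef := by simpa using hQ.add hPQ
  rw [riccati_sub_riccati_eq A B hR hP hQ]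
  exact (hPQ.transpose_mul_mul_same _).add
    ((posDef_add_transpose_mul_mul B hR hQ).posSemidef.transpose_mul_mul_same _)

end Riccati

open Riccati in
theorem stmt11_general {n m : ℕ} (A : Matrix (Fin n) (Fin n) ℝ) (B : Matrix (Fin n) (Fin m) ℝ)
    {R : Matrix (Fin m) (Fin m) ℝ} (hR : R.PosDef)
    (P1 P2 S1 S2 : ℕ → Matrix (Fin n) (Fin n) ℝ)
    (hS2 : ∀ i, (S2 i).PosSemidef)
    (hS : ∀ i, (S1 i - S2 i).PosSemidef)
    (hP02 : (P2 0).PosSemidef)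
    (hP0 : (P1 0 - P2 0).PosSemidef)
    (hrec1 : ∀ i, P1 (i + 1) =
      Aᵀ * P1 i * A - Aᵀ * P1 i * B * (R + Bᵀ * P1 i * B)⁻¹ * Bᵀ * P1 i * A + S1 i)
    (hrec2 : ∀ i, P2 (i + 1) =
      Aᵀ * P2 i * A - Aᵀ * P2 i * B * (R + Bᵀ * P2 i * B)⁻¹ * Bᵀ * P2 i * A + S2 i) :
    ∀ i, (P1 i - P2 i).PosSemidef := by
  have h : ∀ i, (P2 i).PosSemidef ∧ (P1 i - P2 i).PosSemidef := by
    intro i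
    induction i with
    | zero => exact ⟨hP02, hP0⟩
    | succ i ih =>
      obtain ⟨hP2, hP12⟩ := ih
      have hdiff : P1 (i + 1) - P2 (i + 1) =
          (riccati A B R (P1 i) - riccati A B R (P2 i)) + (S1 i - S2 i) := by
        rw [hrec1, hrec2, riccati, riccati]
        abel
      refine ⟨hrec2 i ▸ (riccati_posSemidef A B hR hP2).add (hS2 i), ?_⟩
      rw [hdiff]
      exact (riccati_sub_riccati_posSemidef A B hR hP2 hP12).add (hS i)
  exact fun i => (h i).2

/-- Comparison principle for Riccati difference equations: if `P_{i+1}^j = R(P_i^j, S_i^j)`,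
with `P_0^1 ⪰ P_0^2 ⪰ 0` and `S_i^1 ⪰ S_i^2 ⪰ 0` for all `i`, then `P_i^1 ⪰ P_i^2` for all
`i ∈ ℕ`. -/
theorem stmt11 {n m : ℕ} (A : Matrix (Fin n) (Fin n) ℝ) (B : Matrix (Fin n) (Fin m) ℝ)
    {R : Matrix (Fin m) (Fin m) ℝ} (hR : R.PosDef)
    (P1 P2 S1 S2 : ℕ → Matrix (Fin n) (Fin n) ℝ)
    (hS1 : ∀ i, (S1 i).PosSemidef) (hS2 : ∀ i, (S2 i).PosSemidef)
    (hS : ∀ i, (S1 i - S2 i).PosSemidef)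
    (hP01 : (P1 0).PosSemidef) (hP02 : (P2 0).PosSemidef)
    (hP0 : (P1 0 - P2 0).PosSemidef)
    (hrec1 : ∀ i, P1 (i + 1) =
      Aᵀ * P1 i * A - Aᵀ * P1 i * B * (R + Bᵀ * P1 i * B)⁻¹ * Bᵀ * P1 i * A + S1 i)
    (hrec2 : ∀ i, P2 (i + 1) =
      Aᵀ * P2 i * A - Aᵀ * P2 i * B * (R + Bᵀ * P2 i * B)⁻¹ * Bᵀ * P2 i * A + S2 i) :
    ∀ i, (P1 i - P2 i).PosSemidef :=
  stmt11_general A B hR P1 P2 S1 S2 hS2 hS hP02 hP0 hrec1 hrec2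
end

section
/- Robustness invariance of inexact value iteration: consider the perturbed Riccati recursion P̂_{i+1} = Aᵀ P̂_i A - Aᵀ P̂_i B (R + Bᵀ P̂_i B)^{-1} Bᵀ P̂_i A + S + Δ_i with P̂_0 symmetric positive semidefinite and symmetric disturbances Δ_i satisfying ‖Δ_i‖₂ < λ_min(S) for all i. Then P̂_i is symmetric positive semidefinite for all i ∈ ℕ. -/
/-!
Write `G = R + Bᵀ P B` and `K = G⁻¹ Bᵀ P A` (the LQR gain). Completing the square gives
`Aᵀ P A - Aᵀ P B G⁻¹ Bᵀ P A = (A - B K)ᵀ P (A - B K) + Kᵀ R K`, which is positive semidefinite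
whenever `P` is. In the Loewner order `S ≥ λ_min(S) • 1` and `Δ ≥ -‖Δ‖ • 1`, so `S + Δ ⪰ 0`
as soon as `‖Δ‖ ≤ λ_min(S)`. Hence each step of the recursion preserves positive
semidefiniteness, and the theorem follows by induction.
-/

open Matrix
open scoped Matrix.Norms.L2Operator

namespace Matrix

section Riccati

variable {m n : Type*} [Fintype m] [Fintype n]

theorem riccati_completion_of_square {R : Type*} [CommRing R] (A P : Matrix n n R)
    (B : Matrix n m R) (Q : Matrix m m R) (K : Matrix m n R)
    (hK : (Q + Bᵀ * P * B) * K = Bᵀ * P * A) :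
    Aᵀ * P * A - Aᵀ * P * B * K = (A - B * K)ᵀ * P * (A - B * K) + Kᵀ * Q * K := by
  have hgain : Kᵀ * (Bᵀ * P * A) = Kᵀ * Q * K + Kᵀ * Bᵀ * P * B * K := by
    rw [← hK]
    simp only [Matrix.mul_add, Matrix.add_mul, Matrix.mul_assoc]
  rw [transpose_sub, transpose_mul]
  simp only [Matrix.sub_mul, Matrix.mul_sub, Matrix.mul_assoc] at hgain ⊢
  rw [hgain]
  abel

theorem PosSemidef.riccati [DecidableEq m] {P : Matrix n n ℝ} (hP : P.PosSemidef)
    (A : Matrix n n ℝ) (B : Matrix n m ℝ) {Q : Matrix m m ℝ} (hQ : Q.PosDef) :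
    (Aᵀ * P * A - Aᵀ * P * B * (Q + Bᵀ * P * B)⁻¹ * Bᵀ * P * A).PosSemidef := by
  have hG : (Q + Bᵀ * P * B).PosDef := hQ.add_posSemidef (hP.conjTranspose_mul_mul_same B)
  set K := (Q + Bᵀ * P * B)⁻¹ * (Bᵀ * P * A)
  have hK : (Q + Bᵀ * P * B) * K = Bᵀ * P * A :=
    mul_nonsing_inv_cancel_left _ _ ((isUnit_iff_isUnit_det _).mp hG.isUnit)
  have hgain : Aᵀ * P * B * (Q + Bᵀ * P * B)⁻¹ * Bᵀ * P * A = Aᵀ * P * B * K := by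
    simp only [K, Matrix.mul_assoc]
  rw [hgain, riccati_completion_of_square A P B Q K hK]
  exact (hP.conjTranspose_mul_mul_same _).add (hQ.posSemidef.conjTranspose_mul_mul_same K)

end Riccati

section LoewnerBounds

variable {n : Type*} [Fintype n] [DecidableEq n]

open scoped MatrixOrder

theorem IsHermitian.algebraMap_iInf_eigenvalues_le {𝕜 : Type*} [RCLike 𝕜] {S : Matrix n n 𝕜}
    (hS : S.IsHermitian) : algebraMap ℝ _ (⨅ j, hS.eigenvalues j) ≤ S := by
  rw [algebraMap_le_iff_le_spectrum hS.isSelfAdjoint, hS.spectrum_real_eq_range_eigenvalues]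
  rintro _ ⟨i, rfl⟩
  exact ciInf_le (Set.finite_range _).bddBelow i

theorem l2_opNorm_one_le {𝕜 : Type*} [RCLike 𝕜] : ‖(1 : Matrix n n 𝕜)‖ ≤ 1 := by
  rw [← diagonal_one, l2_opNorm_diagonal]
  exact (pi_norm_le_iff_of_nonneg zero_le_one).2 fun _ => by simp

theorem IsHermitian.algebraMap_neg_l2_opNorm_le {D : Matrix n n ℝ} (hD : D.IsHermitian) :
    algebraMap ℝ _ (-‖D‖) ≤ D := by
  rw [algebraMap_le_iff_le_spectrum hD.isSelfAdjoint]
  intro x hx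
  have hx_le : |x| ≤ ‖D‖ :=
    (spectrum.norm_le_norm_mul_of_mem hx).trans
      (mul_le_of_le_one_right (norm_nonneg D) l2_opNorm_one_le)
  exact neg_le_of_abs_le hx_le

theorem IsHermitian.posSemidef_add_of_l2_opNorm_le {S D : Matrix n n ℝ} (hS : S.IsHermitian)
    (hD : D.IsHermitian) (h : ‖D‖ ≤ ⨅ j, hS.eigenvalues j) : (S + D).PosSemidef := by
  rw [← nonneg_iff_posSemidef]
  calc (0 : Matrix n n ℝ) ≤ algebraMap ℝ _ ((⨅ j, hS.eigenvalues j) + -‖D‖) :=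
        algebraMap_nonneg _ (by linarith)
    _ = algebraMap ℝ _ (⨅ j, hS.eigenvalues j) + algebraMap ℝ _ (-‖D‖) := map_add _ _ _
    _ ≤ S + D := add_le_add hS.algebraMap_iInf_eigenvalues_le hD.algebraMap_neg_l2_opNorm_le

end LoewnerBounds

end Matrix

/-- Robustness invariance of inexact value iteration: if
`P̂_{i+1} = Aᵀ P̂_i A - Aᵀ P̂_i B (R + Bᵀ P̂_i B)⁻¹ Bᵀ P̂_i A + S + Δ_i` with `P̂_0 ⪰ 0`
and symmetric disturbances satisfying `‖Δ_i‖₂ < λ_min(S)` for all `i`, then `P̂_i ⪰ 0`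
for all `i ∈ ℕ`. -/
theorem stmt13 {n m : ℕ} (A : Matrix (Fin n) (Fin n) ℝ) (B : Matrix (Fin n) (Fin m) ℝ)
    {S : Matrix (Fin n) (Fin n) ℝ} {R : Matrix (Fin m) (Fin m) ℝ}
    (hS : S.PosDef) (hR : R.PosDef)
    (Phat : ℕ → Matrix (Fin n) (Fin n) ℝ) (Δ : ℕ → Matrix (Fin n) (Fin n) ℝ)
    (hΔsymm : ∀ i, (Δ i).IsHermitian)
    (hΔ : ∀ i, ‖Δ i‖ < ⨅ j, hS.1.eigenvalues j)
    (hP0 : (Phat 0).PosSemidef)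
    (hrec : ∀ i, Phat (i + 1) =
      Aᵀ * Phat i * A - Aᵀ * Phat i * B * (R + Bᵀ * Phat i * B)⁻¹ * Bᵀ * Phat i * A
        + S + Δ i) :
    ∀ i, (Phat i).PosSemidef := by
  intro i
  induction i with
  | zero => exact hP0
  | succ i ih =>
    rw [hrec i, add_assoc]
    exact (ih.riccati A B hR).add (hS.1.posSemidef_add_of_l2_opNorm_le (hΔsymm i) (hΔ i).le)
end

section
/- Local exponential stability of exact value iteration: let P* be the unique positive definite solution of the DARE P = Aᵀ P A - Aᵀ P B (R + Bᵀ P B)^{-1} Bᵀ P A + S, with closed-loop matrix A* = A - B(R + Bᵀ P* B)^{-1} Bᵀ P* A satisfying ρ(A*) < 1. Fix θ ∈ (ρ(A*), 1), let C_θ ≥ 1 satisfy ‖(A*)^i‖₂ ≤ C_θ θ^i for all i, set ν = ‖A*‖₂² ‖B R^{-1} Bᵀ‖₂ and δ_θ = θ²(1-θ²)/(4 ν C_θ⁴). If the exact value iteration P_{i+1} = Aᵀ P_i A - Aᵀ P_i B (R + Bᵀ P_i B)^{-1} Bᵀ P_i A + S starts at P_0 ∈ 𝕊ⁿ₊ with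 ‖P_0 - P*‖₂ ≤ δ_θ, then ‖P_i - P*‖₂ ≤ 2 C_θ² θ^{2i} ‖P_0 - P*‖₂ for all i ∈ ℕ. -/
/-!
The error `Eᵢ = Pᵢ - P*` of the Riccati iteration obeys `Eᵢ₊₁ = A*ᵀ Eᵢ A* - Gᵢ` with
`Gᵢ = A*ᵀ Eᵢ B (R + Bᵀ Pᵢ B)⁻¹ Bᵀ Eᵢ A*`. Since `Pᵢ ⪰ 0` gives `(R + Bᵀ Pᵢ B)⁻¹ ⪯ R⁻¹`, the
perturbation is quadratic: `‖Gᵢ‖ ≤ ν ‖Eᵢ‖²`. Unrolling the linear part yields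
`‖Eᵢ‖ ≤ C² θ²ⁱ ‖E₀‖ + ν ∑ₖ C² θ^(2(i-1-k)) ‖Eₖ‖²`, and a strong induction shows that as long as
`4 ν C⁴ ‖E₀‖ ≤ θ² (1 - θ²)` the quadratic terms sum to at most `C² θ²ⁱ ‖E₀‖`.
-/

open Matrix Finset
open scoped Matrix.Norms.L2Operator ComplexOrder

lemma eq_pow_mul_mul_pow_sub_sum {α : Type*} [Ring α] {x g : ℕ → α} {a b : α}
    (h : ∀ i, x (i + 1) = a * x i * b - g i) (i : ℕ) :
    x i = a ^ i * x 0 * b ^ i - ∑ k ∈ range i, a ^ (i - 1 - k) * g k * b ^ (i - 1 - k) := by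
  induction i with
  | zero => simp
  | succ i ih =>
    have hterm : ∀ k ∈ range i, a * (a ^ (i - 1 - k) * g k * b ^ (i - 1 - k)) * b
        = a ^ (i + 1 - 1 - k) * g k * b ^ (i + 1 - 1 - k) := by
      intro k hk
      obtain ⟨d, rfl⟩ := Nat.exists_eq_add_of_lt (mem_range.mp hk)
      rw [show k + d + 1 + 1 - 1 - k = d + 1 by omega, show k + d + 1 - 1 - k = d by omega,
        pow_succ' a, pow_succ b]
      simp only [mul_assoc]
    rw [h, ih, sum_range_succ, ← sum_congr rfl hterm, mul_sub, sub_mul, mul_sum, sum_mul,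
      Nat.add_sub_cancel, Nat.sub_self, pow_zero, pow_zero, one_mul, mul_one, pow_succ', pow_succ]
    simp only [mul_assoc]
    abel

lemma norm_le_pow_mul_add_sum_of_norm_sub_le {α : Type*} [NormedRing α] {x : ℕ → α} {a b : α}
    {K q ν : ℝ} (hpow : ∀ j, ‖a ^ j‖ * ‖b ^ j‖ ≤ K * q ^ j)
    (hstep : ∀ j, ‖x (j + 1) - a * x j * b‖ ≤ ν * ‖x j‖ ^ 2) (i : ℕ) :
    ‖x i‖ ≤ K * q ^ i * ‖x 0‖ + ν * ∑ k ∈ range i, K * q ^ (i - 1 - k) * ‖x k‖ ^ 2 := by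
  have hK : ∀ j, 0 ≤ K * q ^ j := fun j =>
    (mul_nonneg (norm_nonneg _) (norm_nonneg _)).trans (hpow j)
  have hconj : ∀ j y, ‖a ^ j * y * b ^ j‖ ≤ K * q ^ j * ‖y‖ := fun j y =>
    calc ‖a ^ j * y * b ^ j‖ ≤ ‖a ^ j‖ * ‖y‖ * ‖b ^ j‖ := norm_mul₃_le
      _ = ‖a ^ j‖ * ‖b ^ j‖ * ‖y‖ := by ring
      _ ≤ K * q ^ j * ‖y‖ := mul_le_mul_of_nonneg_right (hpow j) (norm_nonneg y)
  rw [eq_pow_mul_mul_pow_sub_sum (x := x) (g := fun j => a * x j * b - x (j + 1))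
    (fun j => by abel) i]
  refine (norm_sub_le _ _).trans (add_le_add (hconj i _) ?_)
  rw [mul_sum]
  refine (norm_sum_le _ _).trans (sum_le_sum fun k _ => (hconj _ _).trans ?_)
  rw [norm_sub_rev]
  calc K * q ^ (i - 1 - k) * ‖x (k + 1) - a * x k * b‖
      ≤ K * q ^ (i - 1 - k) * (ν * ‖x k‖ ^ 2) := mul_le_mul_of_nonneg_left (hstep k) (hK _)
    _ = ν * (K * q ^ (i - 1 - k) * ‖x k‖ ^ 2) := by ring

lemma le_two_mul_pow_mul_of_le_pow_mul_add_sum {e : ℕ → ℝ} {K q ν : ℝ} (he : ∀ i, 0 ≤ e i)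
    (hK : 0 ≤ K) (hν : 0 ≤ ν) (hq0 : 0 ≤ q) (hq1 : q < 1)
    (hsmall : 4 * ν * K ^ 2 * e 0 ≤ q * (1 - q))
    (hrec : ∀ i, e i ≤ K * q ^ i * e 0 + ν * ∑ k ∈ range i, K * q ^ (i - 1 - k) * e k ^ 2)
    (i : ℕ) : e i ≤ 2 * K * q ^ i * e 0 := by
  induction i using Nat.strong_induction_on with
  | _ i ih =>
  suffices hsum : ν * ∑ k ∈ range i, K * q ^ (i - 1 - k) * e k ^ 2 ≤ K * q ^ i * e 0 by
    linarith [hrec i]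
  cases i with
  | zero => simpa using mul_nonneg hK (he 0)
  | succ j =>
    have hterm : ∀ k ∈ range (j + 1), K * q ^ (j + 1 - 1 - k) * e k ^ 2
        ≤ 4 * K ^ 3 * e 0 ^ 2 * q ^ j * q ^ k := by
      intro k hk
      obtain ⟨d, rfl⟩ := Nat.exists_eq_add_of_le (Nat.lt_succ_iff.mp (mem_range.mp hk))
      calc K * q ^ (k + d + 1 - 1 - k) * e k ^ 2
          ≤ K * q ^ (k + d + 1 - 1 - k) * (2 * K * q ^ k * e 0) ^ 2 := by
            gcongr
            · exact he k
            · exact ih k (by omega)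
        _ = 4 * K ^ 3 * e 0 ^ 2 * q ^ (k + d) * q ^ k := by
            rw [show k + d + 1 - 1 - k = d by omega]
            ring
    have hgeom : ∑ k ∈ range (j + 1), q ^ k ≤ 1 / (1 - q) := by
      have := geom_sum_Ico_le_of_lt_one (m := 0) (n := j + 1) hq0 hq1
      rwa [← range_eq_Ico, pow_zero] at this
    have h1q : 0 < 1 - q := by linarith
    calc ν * ∑ k ∈ range (j + 1), K * q ^ (j + 1 - 1 - k) * e k ^ 2
        ≤ ν * ∑ k ∈ range (j + 1), 4 * K ^ 3 * e 0 ^ 2 * q ^ j * q ^ k :=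
          mul_le_mul_of_nonneg_left (sum_le_sum hterm) hν
      _ = ν * (4 * K ^ 3 * e 0 ^ 2 * q ^ j) * ∑ k ∈ range (j + 1), q ^ k := by
          rw [mul_assoc ν, ← mul_sum]
      _ ≤ ν * (4 * K ^ 3 * e 0 ^ 2 * q ^ j) * (1 / (1 - q)) := by
          gcongr
      _ = 4 * ν * K ^ 2 * e 0 * (K * e 0 * q ^ j / (1 - q)) := by
          field_simp
      _ ≤ q * (1 - q) * (K * e 0 * q ^ j / (1 - q)) := by
          gcongr
          have := he 0
          positivity
      _ = K * q ^ (j + 1) * e 0 := by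
          field_simp
          ring

lemma Matrix.IsSymm.transpose_mul_mul {α n m : Type*} [CommSemiring α] [Fintype n]
    {X : Matrix n n α} (hX : X.IsSymm) (B : Matrix n m α) : (Bᵀ * X * B).IsSymm := by
  simp only [IsSymm, transpose_mul, transpose_transpose, hX.eq, Matrix.mul_assoc]

lemma Matrix.PosSemidef.isSymm {n : Type*} {X : Matrix n n ℝ} (hX : X.PosSemidef) : X.IsSymm :=
  isHermitian_iff_isSymm.mp hX.isHermitian

lemma Matrix.PosSemidef.transpose_mul_mul_same_s15 {n m : Type*} [Fintype n] [Fintype m]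
    {X : Matrix n n ℝ} (hX : X.PosSemidef) (B : Matrix n m ℝ) : (Bᵀ * X * B).PosSemidef := by
  simpa using hX.conjTranspose_mul_mul_same B

lemma Matrix.PosDef.add_transpose_mul_mul {n m : Type*} [Fintype n] [Fintype m]
    {R : Matrix m m ℝ} {X : Matrix n n ℝ} (hR : R.PosDef) (hX : X.PosSemidef)
    (B : Matrix n m ℝ) : (R + Bᵀ * X * B).PosDef :=
  hR.add_posSemidef (hX.transpose_mul_mul_same_s15 B)

lemma Matrix.l2_opNorm_transpose {n m : Type*} [Fintype n] [Fintype m] [DecidableEq n]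
    [DecidableEq m] (M : Matrix n m ℝ) : ‖Mᵀ‖ = ‖M‖ := by
  rw [← conjTranspose_eq_transpose_of_trivial, l2_opNorm_conjTranspose]

lemma ContinuousLinearMap.norm_le_norm_of_nonneg_of_le {𝕜 E : Type*} [RCLike 𝕜]
    [NormedAddCommGroup E] [InnerProductSpace 𝕜 E] {T U : E →L[𝕜] E} (hT : 0 ≤ T)
    (hTU : T ≤ U) : ‖T‖ ≤ ‖U‖ := by
  rw [nonneg_iff_isPositive] at hT
  rw [T.norm_eq_iSup_rayleighQuotient hT.isSymmetric]
  refine ciSup_le fun x => ?_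
  have hUT : U.rayleighQuotient x = T.rayleighQuotient x + (U - T).rayleighQuotient x := by
    rw [← rayleighQuotient_add, add_sub_cancel]
  have hT0 : 0 ≤ T.rayleighQuotient x := div_nonneg (hT.2 x) (sq_nonneg _)
  have hUT0 : 0 ≤ (U - T).rayleighQuotient x := div_nonneg (hTU.2 x) (sq_nonneg _)
  calc |T.rayleighQuotient x| = T.rayleighQuotient x := abs_of_nonneg hT0
    _ ≤ U.rayleighQuotient x := by linarith
    _ ≤ |U.rayleighQuotient x| := le_abs_self _
    _ ≤ ‖U‖ := U.rayleighQuotient_le_norm x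

section Order

variable {𝕜 n : Type*} [RCLike 𝕜] [Fintype n] [DecidableEq n]

lemma Matrix.PosSemidef.isPositive_toEuclideanCLM {X : Matrix n n 𝕜} (hX : X.PosSemidef) :
    (toEuclideanCLM (n := n) (𝕜 := 𝕜) X).IsPositive := by
  rwa [← ContinuousLinearMap.isPositive_toLinearMap_iff,
    coe_toEuclideanCLM_eq_toEuclideanLin, isPositive_toEuclideanLin_iff]

lemma Matrix.PosSemidef.l2_opNorm_le {X Y : Matrix n n 𝕜} (hX : X.PosSemidef)
    (hXY : (Y - X).PosSemidef) : ‖X‖ ≤ ‖Y‖ := by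
  rw [cstar_norm_def, cstar_norm_def]
  refine ContinuousLinearMap.norm_le_norm_of_nonneg_of_le
    ((ContinuousLinearMap.nonneg_iff_isPositive _).mpr hX.isPositive_toEuclideanCLM) ?_
  rw [ContinuousLinearMap.le_def, ← map_sub]
  exact hXY.isPositive_toEuclideanCLM

lemma Matrix.PosDef.posSemidef_inv_sub_inv {R W : Matrix n n 𝕜} (hR : R.PosDef) (hW : W.PosDef)
    (hRW : (W - R).PosSemidef) : (R⁻¹ - W⁻¹).PosSemidef := by
  have hWinv : (W⁻¹)ᴴ = W⁻¹ := hW.inv.isHermitian.eq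
  have hD : (W - R)ᴴ = W - R := hRW.isHermitian.eq
  have hRu := (isUnit_iff_isUnit_det R).mp hR.isUnit
  have hWu := (isUnit_iff_isUnit_det W).mp hW.isUnit
  have h1 : R⁻¹ * (W - R) * W⁻¹ = R⁻¹ - W⁻¹ := by
    rw [Matrix.mul_sub, Matrix.sub_mul, nonsing_inv_mul _ hRu, Matrix.one_mul, Matrix.mul_assoc,
      mul_nonsing_inv _ hWu, Matrix.mul_one]
  have h2 : W⁻¹ * (W - R) * R⁻¹ = R⁻¹ - W⁻¹ := by
    rw [Matrix.mul_sub, Matrix.sub_mul, nonsing_inv_mul _ hWu, Matrix.one_mul, Matrix.mul_assoc,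
      mul_nonsing_inv _ hRu, Matrix.mul_one]
  have key : R⁻¹ - W⁻¹ = (W⁻¹)ᴴ * (W - R) * W⁻¹ + ((W - R) * W⁻¹)ᴴ * R⁻¹ * ((W - R) * W⁻¹) :=
    calc R⁻¹ - W⁻¹ = W⁻¹ * (W - R) * R⁻¹ := h2.symm
      _ = W⁻¹ * (W - R) * (W⁻¹ + R⁻¹ * (W - R) * W⁻¹) := by rw [h1, add_sub_cancel]
      _ = _ := by
        rw [conjTranspose_mul, hD, hWinv]
        simp only [Matrix.mul_add, Matrix.mul_assoc]
  rw [key]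
  exact (hRW.conjTranspose_mul_mul_same _).add (hR.inv.posSemidef.conjTranspose_mul_mul_same _)

end Order

section Riccati

variable {𝕜 n m : Type*} [CommRing 𝕜] [Fintype n] [Fintype m] [DecidableEq m]
  (A : Matrix n n 𝕜) (B : Matrix n m 𝕜) (R : Matrix m m 𝕜) (S : Matrix n n 𝕜)

noncomputable def riccatiGain (X : Matrix n n 𝕜) : Matrix m n 𝕜 := (R + Bᵀ * X * B)⁻¹ * Bᵀ * X * A

noncomputable def closedLoop (X : Matrix n n 𝕜) : Matrix n n 𝕜 := A - B * riccatiGain A B R X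

noncomputable def riccati (X : Matrix n n 𝕜) : Matrix n n 𝕜 :=
  Aᵀ * X * A - Aᵀ * X * B * (R + Bᵀ * X * B)⁻¹ * Bᵀ * X * A + S

/-- The one-step cost matrix of the feedback `u = -K x` under terminal cost `X`; the Riccati map
is its minimum over `K`. -/
def gainCost (K : Matrix m n 𝕜) (X : Matrix n n 𝕜) : Matrix n n 𝕜 :=
  (A - B * K)ᵀ * X * (A - B * K) + Kᵀ * R * K + S

variable {A B R} {X : Matrix n n 𝕜}

lemma mul_riccatiGain (hW : IsUnit (R + Bᵀ * X * B).det) :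
    (R + Bᵀ * X * B) * riccatiGain A B R X = Bᵀ * X * A := by
  simp only [riccatiGain, ← Matrix.mul_assoc, mul_nonsing_inv _ hW, Matrix.one_mul]

lemma transpose_riccatiGain_mul (hX : X.IsSymm) (hR : R.IsSymm)
    (hW : IsUnit (R + Bᵀ * X * B).det) :
    (riccatiGain A B R X)ᵀ * (R + Bᵀ * X * B) = Aᵀ * X * B := by
  have hWinv : (R + Bᵀ * X * B)⁻¹ᵀ = (R + Bᵀ * X * B)⁻¹ := (hR.add (hX.transpose_mul_mul B)).inv.eq
  rw [riccatiGain, transpose_mul, transpose_mul, transpose_mul, hWinv, transpose_transpose, hX.eq]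
  have hWW := nonsing_inv_mul _ hW
  simp only [Matrix.mul_assoc] at hWW ⊢
  rw [hWW, Matrix.mul_one]

lemma gainCost_eq_riccati_add (hX : X.IsSymm) (hR : R.IsSymm)
    (hW : IsUnit (R + Bᵀ * X * B).det) (K : Matrix m n 𝕜) :
    gainCost A B R S K X = riccati A B R S X
      + (K - riccatiGain A B R X)ᵀ * (R + Bᵀ * X * B) * (K - riccatiGain A B R X) := by
  have hsq : (K - riccatiGain A B R X)ᵀ * (R + Bᵀ * X * B) * (K - riccatiGain A B R X)
      = Kᵀ * (R + Bᵀ * X * B) * K - Kᵀ * (Bᵀ * X * A) - Aᵀ * X * B * K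
        + Aᵀ * X * B * riccatiGain A B R X := by
    rw [transpose_sub, Matrix.sub_mul, Matrix.sub_mul, Matrix.mul_sub, Matrix.mul_sub,
      transpose_riccatiGain_mul hX hR hW, Matrix.mul_assoc Kᵀ _ (riccatiGain A B R X),
      mul_riccatiGain hW]
    abel
  rw [hsq, gainCost, riccati, riccatiGain]
  simp only [Matrix.transpose_sub, Matrix.transpose_mul, Matrix.mul_sub, Matrix.sub_mul,
    Matrix.mul_add, Matrix.add_mul, Matrix.mul_assoc]
  abel

lemma gainCost_riccatiGain (hX : X.IsSymm) (hR : R.IsSymm) (hW : IsUnit (R + Bᵀ * X * B).det) :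
    gainCost A B R S (riccatiGain A B R X) X = riccati A B R S X := by
  simp [gainCost_eq_riccati_add S hX hR hW]

omit [DecidableEq m] in
lemma gainCost_sub_gainCost (K : Matrix m n 𝕜) (X Q : Matrix n n 𝕜) :
    gainCost A B R S K X - gainCost A B R S K Q = (A - B * K)ᵀ * (X - Q) * (A - B * K) := by
  simp only [gainCost, Matrix.mul_sub, Matrix.sub_mul]
  abel

lemma riccatiGain_sub_riccatiGain {Q : Matrix n n 𝕜} (hWX : IsUnit (R + Bᵀ * X * B).det)
    (hWQ : IsUnit (R + Bᵀ * Q * B).det) :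
    riccatiGain A B R X - riccatiGain A B R Q
      = (R + Bᵀ * X * B)⁻¹ * (Bᵀ * (X - Q) * closedLoop A B R Q) := by
  have hW : R + Bᵀ * X * B = (R + Bᵀ * Q * B) + Bᵀ * (X - Q) * B := by
    simp only [Matrix.mul_sub, Matrix.sub_mul]
    abel
  have key : (R + Bᵀ * X * B) * (riccatiGain A B R X - riccatiGain A B R Q)
      = Bᵀ * (X - Q) * closedLoop A B R Q := by
    rw [Matrix.mul_sub, mul_riccatiGain hWX, hW, Matrix.add_mul, mul_riccatiGain hWQ, closedLoop]
    simp only [Matrix.mul_sub, Matrix.sub_mul, Matrix.mul_assoc]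
    abel
  rw [← key, ← Matrix.mul_assoc, nonsing_inv_mul _ hWX, Matrix.one_mul]

lemma riccati_sub_riccati {Q : Matrix n n 𝕜} (hX : X.IsSymm) (hQ : Q.IsSymm) (hR : R.IsSymm)
    (hWX : IsUnit (R + Bᵀ * X * B).det) (hWQ : IsUnit (R + Bᵀ * Q * B).det) :
    riccati A B R S X - riccati A B R S Q
      = (closedLoop A B R Q)ᵀ * (X - Q) * closedLoop A B R Q
        - (closedLoop A B R Q)ᵀ * (X - Q) * (B * (R + Bᵀ * X * B)⁻¹ * Bᵀ) * (X - Q)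
          * closedLoop A B R Q := by
  have hWinv : (R + Bᵀ * X * B)⁻¹ᵀ = (R + Bᵀ * X * B)⁻¹ :=
    (hR.add (hX.transpose_mul_mul B)).inv.eq
  have hsq : (riccatiGain A B R Q - riccatiGain A B R X)ᵀ * (R + Bᵀ * X * B)
        * (riccatiGain A B R Q - riccatiGain A B R X)
      = (closedLoop A B R Q)ᵀ * (X - Q) * (B * (R + Bᵀ * X * B)⁻¹ * Bᵀ) * (X - Q)
          * closedLoop A B R Q := by
    rw [← neg_sub, transpose_neg, Matrix.neg_mul, Matrix.mul_neg, Matrix.neg_mul, neg_neg,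
      riccatiGain_sub_riccatiGain hWX hWQ, transpose_mul, transpose_mul, transpose_mul,
      transpose_transpose, (hX.sub hQ).eq, hWinv]
    have hWW := nonsing_inv_mul _ hWX
    simp only [Matrix.mul_assoc] at hWW ⊢
    rw [← Matrix.mul_assoc _ (R + _) _, hWW, Matrix.one_mul]
  -- Compare both Riccati values with the cost of the single gain `riccatiGain A B R Q`.
  rw [← gainCost_riccatiGain S hQ hR hWQ, eq_sub_of_add_eq (gainCost_eq_riccati_add S hX hR hWX
    (riccatiGain A B R Q)).symm, hsq, sub_right_comm, gainCost_sub_gainCost]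
  rfl

end Riccati

section Real

variable {n m : Type*} [Fintype n] [Fintype m] [DecidableEq m]
  {A : Matrix n n ℝ} {B : Matrix n m ℝ} {R : Matrix m m ℝ} {X Q : Matrix n n ℝ}

lemma Matrix.PosDef.isUnit_det_add_transpose_mul_mul (hR : R.PosDef) (hX : X.PosSemidef) :
    IsUnit (R + Bᵀ * X * B).det :=
  (isUnit_iff_isUnit_det _).mp (hR.add_transpose_mul_mul hX B).isUnit

lemma riccati_posSemidef {S : Matrix n n ℝ} (hR : R.PosDef) (hS : S.PosSemidef)
    (hX : X.PosSemidef) : (riccati A B R S X).PosSemidef := by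
  rw [← gainCost_riccatiGain S hX.isSymm hR.posSemidef.isSymm
    (hR.isUnit_det_add_transpose_mul_mul hX)]
  exact ((hX.transpose_mul_mul_same_s15 _).add (hR.posSemidef.transpose_mul_mul_same_s15 _)).add hS

lemma norm_mul_inv_mul_transpose_le [DecidableEq n] (hR : R.PosDef) (hX : X.PosSemidef) :
    ‖B * (R + Bᵀ * X * B)⁻¹ * Bᵀ‖ ≤ ‖B * R⁻¹ * Bᵀ‖ := by
  have hW := hR.add_transpose_mul_mul hX B
  refine PosSemidef.l2_opNorm_le (by simpa using hW.inv.posSemidef.mul_mul_conjTranspose_same B) ?_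
  rw [← Matrix.sub_mul, ← Matrix.mul_sub]
  simpa using (hR.posSemidef_inv_sub_inv hW (by simpa using hX.transpose_mul_mul_same_s15 B)
    ).mul_mul_conjTranspose_same B

lemma norm_riccati_sub_riccati_sub_le [DecidableEq n] {S : Matrix n n ℝ} (hR : R.PosDef)
    (hX : X.PosSemidef) (hQ : Q.PosSemidef) :
    ‖riccati A B R S X - riccati A B R S Q
        - (closedLoop A B R Q)ᵀ * (X - Q) * closedLoop A B R Q‖
      ≤ ‖closedLoop A B R Q‖ ^ 2 * ‖B * R⁻¹ * Bᵀ‖ * ‖X - Q‖ ^ 2 := by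
  rw [riccati_sub_riccati S hX.isSymm hQ.isSymm hR.posSemidef.isSymm
    (hR.isUnit_det_add_transpose_mul_mul hX) (hR.isUnit_det_add_transpose_mul_mul hQ),
    sub_sub_cancel_left, norm_neg]
  set L := closedLoop A B R Q
  calc ‖Lᵀ * (X - Q) * (B * (R + Bᵀ * X * B)⁻¹ * Bᵀ) * (X - Q) * L‖
      ≤ ‖Lᵀ‖ * ‖X - Q‖ * ‖B * (R + Bᵀ * X * B)⁻¹ * Bᵀ‖ * ‖X - Q‖ * ‖L‖ := by
        grw [norm_mul_le, norm_mul_le, norm_mul₃_le]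
    _ = ‖L‖ ^ 2 * ‖B * (R + Bᵀ * X * B)⁻¹ * Bᵀ‖ * ‖X - Q‖ ^ 2 := by
        rw [l2_opNorm_transpose]; ring
    _ ≤ ‖L‖ ^ 2 * ‖B * R⁻¹ * Bᵀ‖ * ‖X - Q‖ ^ 2 := by
        grw [norm_mul_inv_mul_transpose_le hR hX]

end Real

theorem stmt15_general {n m : ℕ} (A : Matrix (Fin n) (Fin n) ℝ) (B : Matrix (Fin n) (Fin m) ℝ)
    {S : Matrix (Fin n) (Fin n) ℝ} {R : Matrix (Fin m) (Fin m) ℝ}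
    (hS : S.PosDef) (hR : R.PosDef)
    (Pstar : Matrix (Fin n) (Fin n) ℝ) (hPstar : Pstar.PosDef)
    (hDARE : Pstar =
      Aᵀ * Pstar * A - Aᵀ * Pstar * B * (R + Bᵀ * Pstar * B)⁻¹ * Bᵀ * Pstar * A + S)
    (θ Cθ : ℝ)
    (hθ1 : θ < 1) (hθ0 : 0 < θ)
    (hCθ : ∀ i : ℕ,
      ‖(A - B * ((R + Bᵀ * Pstar * B)⁻¹ * Bᵀ * Pstar * A)) ^ i‖ ≤ Cθ * θ ^ i)
    (P : ℕ → Matrix (Fin n) (Fin n) ℝ) (hP0 : (P 0).PosSemidef)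
    (hrec : ∀ i, P (i + 1) =
      Aᵀ * P i * A - Aᵀ * P i * B * (R + Bᵀ * P i * B)⁻¹ * Bᵀ * P i * A + S)
    (hinit : ‖P 0 - Pstar‖ ≤
      θ ^ 2 * (1 - θ ^ 2) /
        (4 * (‖A - B * ((R + Bᵀ * Pstar * B)⁻¹ * Bᵀ * Pstar * A)‖ ^ 2 *
          ‖B * R⁻¹ * Bᵀ‖) * Cθ ^ 4)) :
    ∀ i : ℕ, ‖P i - Pstar‖ ≤ 2 * Cθ ^ 2 * θ ^ (2 * i) * ‖P 0 - Pstar‖ := by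
  change ∀ j, ‖closedLoop A B R Pstar ^ j‖ ≤ Cθ * θ ^ j at hCθ
  change ‖P 0 - Pstar‖ ≤ _ / (4 * (‖closedLoop A B R Pstar‖ ^ 2 * _) * _) at hinit
  change Pstar = riccati A B R S Pstar at hDARE
  change ∀ i, P (i + 1) = riccati A B R S (P i) at hrec
  set L := closedLoop A B R Pstar
  set ν := ‖L‖ ^ 2 * ‖B * R⁻¹ * Bᵀ‖
  have hPsd : ∀ i, (P i).PosSemidef := by
    intro i
    induction i with
    | zero => exact hP0
    | succ i ih => exact hrec i ▸ riccati_posSemidef hR hS.posSemidef ih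
  have hstep : ∀ i, ‖P (i + 1) - Pstar - Lᵀ * (P i - Pstar) * L‖ ≤ ν * ‖P i - Pstar‖ ^ 2 := by
    intro i
    have h := norm_riccati_sub_riccati_sub_le (A := A) (B := B) (S := S) hR (hPsd i)
      hPstar.posSemidef
    rwa [← hDARE, ← hrec] at h
  have hpow : ∀ j, ‖Lᵀ ^ j‖ * ‖L ^ j‖ ≤ Cθ ^ 2 * (θ ^ 2) ^ j := by
    intro j
    rw [← transpose_pow, l2_opNorm_transpose, ← sq, ← pow_mul, mul_comm 2 j, pow_mul, ← mul_pow]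
    exact pow_le_pow_left₀ (norm_nonneg _) (hCθ j) 2
  have hθ2 : θ ^ 2 < 1 := by nlinarith
  have hsmall : 4 * ν * (Cθ ^ 2) ^ 2 * ‖P 0 - Pstar‖ ≤ θ ^ 2 * (1 - θ ^ 2) := by
    have h := mul_le_of_le_div₀ (mul_nonneg (sq_nonneg θ) (by linarith)) (by positivity) hinit
    linarith
  intro i
  rw [pow_mul]
  exact le_two_mul_pow_mul_of_le_pow_mul_add_sum (e := fun i => ‖P i - Pstar‖)
    (fun _ => norm_nonneg _) (sq_nonneg _) (by positivity) (sq_nonneg _) hθ2 hsmall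
    (norm_le_pow_mul_add_sum_of_norm_sub_le (x := fun i => P i - Pstar) hpow hstep) i

/-- Local exponential stability of exact value iteration for the DARE. If `P*` solves the
DARE with Schur-stable closed loop `A* = A - B (R + Bᵀ P* B)⁻¹ Bᵀ P* A`, `θ ∈ (ρ(A*), 1)`,
`C_θ ≥ 1` satisfies `‖(A*)^i‖ ≤ C_θ θ^i`, `ν = ‖A*‖² ‖B R⁻¹ Bᵀ‖`,
`δ_θ = θ²(1-θ²)/(4 ν C_θ⁴)`, and the exact value iteration starts at a positive
semidefinite `P 0` with `‖P 0 - P*‖ ≤ δ_θ`, then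
`‖P i - P*‖ ≤ 2 C_θ² θ^(2i) ‖P 0 - P*‖` for all `i`. -/
theorem stmt15 {n m : ℕ} (A : Matrix (Fin n) (Fin n) ℝ) (B : Matrix (Fin n) (Fin m) ℝ)
    {S : Matrix (Fin n) (Fin n) ℝ} {R : Matrix (Fin m) (Fin m) ℝ}
    (hS : S.PosDef) (hR : R.PosDef)
    (Pstar : Matrix (Fin n) (Fin n) ℝ) (hPstar : Pstar.PosDef)
    (hDARE : Pstar =
      Aᵀ * Pstar * A - Aᵀ * Pstar * B * (R + Bᵀ * Pstar * B)⁻¹ * Bᵀ * Pstar * A + S)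
    (θ Cθ : ℝ)
    (hρθ : spectralRadius ℂ
        ((A - B * ((R + Bᵀ * Pstar * B)⁻¹ * Bᵀ * Pstar * A)).map Complex.ofReal)
        < ENNReal.ofReal θ)
    (hθ1 : θ < 1) (hθ0 : 0 < θ) (hC : 1 ≤ Cθ)
    (hCθ : ∀ i : ℕ,
      ‖(A - B * ((R + Bᵀ * Pstar * B)⁻¹ * Bᵀ * Pstar * A)) ^ i‖ ≤ Cθ * θ ^ i)
    (P : ℕ → Matrix (Fin n) (Fin n) ℝ) (hP0 : (P 0).PosSemidef)
    (hrec : ∀ i, P (i + 1) =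
      Aᵀ * P i * A - Aᵀ * P i * B * (R + Bᵀ * P i * B)⁻¹ * Bᵀ * P i * A + S)
    (hinit : ‖P 0 - Pstar‖ ≤
      θ ^ 2 * (1 - θ ^ 2) /
        (4 * (‖A - B * ((R + Bᵀ * Pstar * B)⁻¹ * Bᵀ * Pstar * A)‖ ^ 2 *
          ‖B * R⁻¹ * Bᵀ‖) * Cθ ^ 4)) :
    ∀ i : ℕ, ‖P i - Pstar‖ ≤ 2 * Cθ ^ 2 * θ ^ (2 * i) * ‖P 0 - Pstar‖ :=
  stmt15_general A B hS hR Pstar hPstar hDARE θ Cθ hθ1 hθ0 hCθ P hP0 hrec hinit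
end
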